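/- arXiv:1504.01754 — 2 statements merged into one kernel-verified Lean document; each statement's English description precedes it below -/
import Mathlib

section
/- For all real numbers 0 < λ < E, the Fricke–Vogt invariant evaluated along the continuum curve of initial conditions satisfies I(x_λ(E), y_λ(E), z_λ(E)) = (λ²/(4E(E−λ))) · sin²√E · sin²√(E−λ). -/
open Real

/-- The Fricke–Vogt invariant. -/
def frickeVogt (x y z : ℝ) : ℝ := x ^ 2 + y ^ 2 + z ^ 2 - 2 * x * y * z - 1

/-- First coordinate of the continuum curve of initial conditions. -/
noncomputable def contX (lam E : ℝ) : ℝ := cos (sqrt E)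

/-- Second coordinate of the continuum curve of initial conditions. -/
noncomputable def contY (lam E : ℝ) : ℝ := cos (sqrt (E - lam))

/-- Third coordinate of the continuum curve of initial conditions. -/
noncomputable def contZ (lam E : ℝ) : ℝ :=
  cos (sqrt E) * cos (sqrt (E - lam)) -
    (1 / 2) * (sqrt (E / (E - lam)) + sqrt ((E - lam) / E)) *
      sin (sqrt E) * sin (sqrt (E - lam))

theorem frickeVogt_along_continuum_curve (lam E : ℝ) (hlam : 0 < lam) (hE : lam < E) :
    frickeVogt (contX lam E) (contY lam E) (contZ lam E) =
      lam ^ 2 / (4 * E * (E - lam)) * sin (sqrt E) ^ 2 * sin (sqrt (E - lam)) ^ 2 := by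
  have hE0 : 0 < E := hlam.trans hE
  have hEl : 0 < E - lam := sub_pos.mpr hE
  have ha : (sqrt E) ^ 2 = E := Real.sq_sqrt hE0.le
  have hb : (sqrt (E - lam)) ^ 2 = E - lam := Real.sq_sqrt hEl.le
  have ha0 : sqrt E ≠ 0 := (Real.sqrt_pos.mpr hE0).ne'
  have hb0 : sqrt (E - lam) ≠ 0 := (Real.sqrt_pos.mpr hEl).ne'
  have hu : sqrt (E / (E - lam)) = sqrt E / sqrt (E - lam) := Real.sqrt_div hE0.le _
  have hv : sqrt ((E - lam) / E) = sqrt (E - lam) / sqrt E := Real.sqrt_div hEl.le _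
  have hsa : sin (sqrt E) ^ 2 = 1 - cos (sqrt E) ^ 2 := Real.sin_sq (sqrt E)
  have hsb : sin (sqrt (E - lam)) ^ 2 = 1 - cos (sqrt (E - lam)) ^ 2 :=
    Real.sin_sq (sqrt (E - lam))
  have hp : (sqrt E / sqrt (E - lam)) ^ 2 = E / (E - lam) := by rw [div_pow, ha, hb]
  have hq : (sqrt (E - lam) / sqrt E) ^ 2 = (E - lam) / E := by rw [div_pow, ha, hb]
  have hpq : (sqrt E / sqrt (E - lam)) * (sqrt (E - lam) / sqrt E) = 1 := by
    field_simp
  have key : ((1/2) * (sqrt E / sqrt (E - lam) + sqrt (E - lam) / sqrt E)) ^ 2 - 1 =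
      lam ^ 2 / (4 * E * (E - lam)) := by
    have expand : ((1/2) * (sqrt E / sqrt (E - lam) + sqrt (E - lam) / sqrt E)) ^ 2 - 1 =
        ((sqrt E / sqrt (E - lam)) ^ 2 + (sqrt (E - lam) / sqrt E) ^ 2) / 4 +
          ((sqrt E / sqrt (E - lam)) * (sqrt (E - lam) / sqrt E)) / 2 - 1 := by ring
    rw [expand, hp, hq, hpq]
    field_simp
    ring
  simp only [frickeVogt, contX, contY, contZ, hu, hv]
  rw [← key]
  linear_combination (sin (sqrt (E - lam)) ^ 2) * hsa + (1 - cos (sqrt E) ^ 2) * hsb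
end

section
/- For every fixed λ > 0, the Fricke–Vogt invariant along the continuum curve of initial conditions tends to zero in the high-energy regime: I(x_λ(E), y_λ(E), z_λ(E)) → 0 as E → ∞. In other words, the curve approaches the Cayley cubic S₀ at high energies. -/
/-!
With `x = cos √E`, `y = cos √(E - λ)` and `z = x y - k sin √E sin √(E - λ)`, the identity
`sin² + cos² = 1` collapses the invariant to `I = (k² - 1) sin² √E sin² √(E - λ)`.
Here `k` is the mean of `√(E / (E - λ))` and its reciprocal, both of which tend to `1`,
so `k² - 1 → 0` while the sine factor stays in `[0, 1]`.
-/

open Real Filter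

theorem frickeVogt_cos_cos_sub (θ φ k : ℝ) :
    frickeVogt (cos θ) (cos φ) (cos θ * cos φ - k * sin θ * sin φ) =
      (k ^ 2 - 1) * (sin θ ^ 2 * sin φ ^ 2) := by
  unfold frickeVogt
  linear_combination sin φ ^ 2 * sin_sq_add_cos_sq θ + (1 - cos θ ^ 2) * sin_sq_add_cos_sq φ

theorem tendsto_sub_div_self_atTop (c : ℝ) :
    Tendsto (fun E : ℝ => (E - c) / E) atTop (nhds 1) := by
  have h : Tendsto (fun E : ℝ => 1 - c / E) atTop (nhds (1 - 0)) :=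
    tendsto_const_nhds.sub (tendsto_const_nhds.div_atTop tendsto_id)
  rw [sub_zero] at h
  refine h.congr' ?_
  filter_upwards [eventually_ne_atTop 0] with E hE
  field_simp

/-- The coefficient of `sin √E · sin √(E - lam)` in `contZ lam E`. -/
noncomputable def contCoeff (lam E : ℝ) : ℝ :=
  (1 / 2) * (sqrt (E / (E - lam)) + sqrt ((E - lam) / E))

theorem tendsto_contCoeff_atTop (lam : ℝ) : Tendsto (contCoeff lam) atTop (nhds 1) := by
  have hright := tendsto_sub_div_self_atTop lam
  have hleft : Tendsto (fun E : ℝ => E / (E - lam)) atTop (nhds 1) := by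
    simpa only [inv_div, inv_one] using hright.inv₀ one_ne_zero
  have hsqrt := continuous_sqrt.tendsto 1
  rw [sqrt_one] at hsqrt
  have h := ((hsqrt.comp hleft).add (hsqrt.comp hright)).const_mul (1 / 2 : ℝ)
  rwa [show (1 / 2 : ℝ) * (1 + 1) = 1 by norm_num] at h

theorem frickeVogt_cont (lam E : ℝ) :
    frickeVogt (contX lam E) (contY lam E) (contZ lam E) =
      (contCoeff lam E ^ 2 - 1) * (sin (sqrt E) ^ 2 * sin (sqrt (E - lam)) ^ 2) :=
  frickeVogt_cos_cos_sub _ _ _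

theorem frickeVogt_tendsto_zero_highEnergy_general (lam : ℝ) :
    Tendsto (fun E : ℝ => frickeVogt (contX lam E) (contY lam E) (contZ lam E))
      atTop (nhds 0) := by
  simp only [frickeVogt_cont]
  have hcoeff : Tendsto (fun E => contCoeff lam E ^ 2 - 1) atTop (nhds 0) := by
    simpa using ((tendsto_contCoeff_atTop lam).pow 2).sub_const 1
  refine hcoeff.zero_mul_isBoundedUnder_le (isBoundedUnder_of ⟨1, fun E => ?_⟩)
  rw [Function.comp_apply, Real.norm_eq_abs, abs_of_nonneg (by positivity)]
  exact mul_le_one₀ (sin_sq_le_one _) (sq_nonneg _) (sin_sq_le_one _)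

theorem frickeVogt_tendsto_zero_highEnergy (lam : ℝ) (hlam : 0 < lam) :
    Tendsto (fun E : ℝ => frickeVogt (contX lam E) (contY lam E) (contZ lam E))
      atTop (nhds 0) :=
  frickeVogt_tendsto_zero_highEnergy_general lam
end
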